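/- arXiv:2510.11980 — 3 statements merged into one kernel-verified Lean document; each statement's English description precedes it below -/
import Mathlib

section
/- The number of consecutive equi-n-squares |Σ_n| satisfies |Σ_n| ∼ 4n·(n²−n)!/((n−1)!)^n as n → ∞; that is, the ratio |Σ_n| · ((n−1)!)^n / (4n·(n²−n)!) tends to 1 as n → ∞. -/
open Nat Finset Filter

/-- An equi-`n`-square: an `n × n` array with entries in `Fin n` in which
every value appears exactly `n` times. -/
def IsEquiSquare (n : ℕ) (g : Fin n → Fin n → Fin n) : Prop :=
  ∀ k : Fin n, Nat.card {p : Fin n × Fin n // g p.1 p.2 = k} = n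

/-- Row `i` is consecutive (1-indexed: entry in column `j` is `j`). -/
def RowConsec {n : ℕ} (g : Fin n → Fin n → Fin n) (i : Fin n) : Prop :=
  ∀ j : Fin n, g i j = j

/-- Row `i` is reverse-consecutive (1-indexed: entry in column `j` is `n+1-j`). -/
def RowRevConsec {n : ℕ} (g : Fin n → Fin n → Fin n) (i : Fin n) : Prop :=
  ∀ j : Fin n, (g i j : ℕ) + (j : ℕ) + 1 = n

/-- Column `j` is consecutive (1-indexed: entry in row `i` is `i`). -/
def ColConsec {n : ℕ} (g : Fin n → Fin n → Fin n) (j : Fin n) : Prop :=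
  ∀ i : Fin n, g i j = i

/-- Column `j` is reverse-consecutive (1-indexed: entry in row `i` is `n+1-i`). -/
def ColRevConsec {n : ℕ} (g : Fin n → Fin n → Fin n) (j : Fin n) : Prop :=
  ∀ i : Fin n, (g i j : ℕ) + (i : ℕ) + 1 = n

/-- A consecutive equi-`n`-square: an equi-`n`-square with at least one consecutive or
reverse-consecutive row or column. -/
def IsConsecEquiSquare (n : ℕ) (g : Fin n → Fin n → Fin n) : Prop :=
  IsEquiSquare n g ∧
    ((∃ i : Fin n, RowConsec g i ∨ RowRevConsec g i) ∨
      (∃ j : Fin n, ColConsec g j ∨ ColRevConsec g j))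

/-!
Split `Σ_n` into the `4n` sets `A_s` of equi-squares whose line `s` (a row or a column) reads
`1, …, n` or `n, …, 1`. Once a line is fixed, the other `n² - n` cells must take every value
exactly `n - 1` times, so `|A_s| = (n² - n)! / ((n - 1)!)^n` by the multinomial count, and the
union bound gives `|Σ_n| ≤ 4n · |A_s|`. Conversely, by Bonferroni `|Σ_n|` is at least
`∑ |A_s|` minus the pairwise intersections. Prescribing `m` of `N` cells of a filling whose
value multiplicities are at most `C` divides the number of fillings by at least
`((N - m + 1) / C)^m`. Two distinct lines share at most one cell, so inside `A_s` a second line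
prescribes `m ∈ {n - 1, n}` of the `N = n² - n` free cells, with `C = n - 1`; hence
`|A_s ∩ A_t| ≤ |A_s| / (n - 1)^(n - 1)`, and the `16n²` pairs contribute a relative error
`O(n / (n - 1)^(n - 1)) → 0`.
-/

section FiberCards

variable {α ι : Type*}

def HasFiberCards (f : α → ι) (c : ι → ℕ) : Prop :=
  ∀ i, Nat.card {a // f a = i} = c i

variable [Finite α]

theorem natCard_subtype_eq_add (R P : α → Prop) :
    Nat.card {a // P a} = Nat.card {a // R a ∧ P a} + Nat.card {a : {a // ¬R a} // P a} := by
  classical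
  cases nonempty_fintype α
  rw [Nat.card_congr (Equiv.subtypeSubtypeEquivSubtypeInter (fun a => ¬R a) P),
    Nat.card_eq_fintype_card, Nat.card_eq_fintype_card, Nat.card_eq_fintype_card,
    Fintype.card_subtype, Fintype.card_subtype, Fintype.card_subtype,
    ← card_filter_add_card_filter_not (s := univ.filter P) R, filter_filter, filter_filter]
  simp only [and_comm]

theorem natCard_subtype_not (R : α → Prop) :
    Nat.card {a // ¬R a} = Nat.card α - Nat.card {a // R a} := by
  classical
  cases nonempty_fintype α
  simp only [Nat.card_eq_fintype_card, Fintype.card_subtype_compl]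

section Prescribed

variable (R : α → Prop) (h : α → ι)

theorem natCard_fiber_eq_add_of_eqOn {f : α → ι} (hfh : ∀ a, R a → f a = h a) (i : ι) :
    Nat.card {a // f a = i} =
      Nat.card {a // R a ∧ h a = i} + Nat.card {a : {a // ¬R a} // f a = i} := by
  rw [natCard_subtype_eq_add R]
  congr 1
  exact Nat.card_congr (Equiv.subtypeEquivRight fun a => and_congr_right fun ha => by rw [hfh a ha])

variable {R h} in
theorem HasFiberCards.restrict {f : α → ι} {c : ι → ℕ}
    (hf : HasFiberCards f c) (hfh : ∀ a, R a → f a = h a) :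
    HasFiberCards (fun a : {a // ¬R a} => f a) fun i => c i - Nat.card {a // R a ∧ h a = i} :=
  fun i => by
    have := natCard_fiber_eq_add_of_eqOn R h hfh i
    rw [hf i] at this
    change Nat.card {a : {a // ¬R a} // f a = i} = c i - _
    omega

theorem natCard_hasFiberCards_eqOn {c : ι → ℕ} (hr : ∀ i, Nat.card {a // R a ∧ h a = i} ≤ c i) :
    Nat.card {f : α → ι // HasFiberCards f c ∧ ∀ a, R a → f a = h a} =
      Nat.card {f : {a // ¬R a} → ι //
        HasFiberCards f fun i => c i - Nat.card {a // R a ∧ h a = i}} := by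
  classical
  refine Nat.card_congr
    { toFun := fun f => ⟨fun a => f.1 a, f.2.1.restrict f.2.2⟩
      invFun := fun f => ⟨fun a => if ha : R a then h a else f.1 ⟨a, ha⟩, fun i => ?_,
        fun a ha => dif_pos ha⟩
      left_inv := ?_
      right_inv := ?_ }
  · rw [natCard_fiber_eq_add_of_eqOn R h (fun a ha => dif_pos ha) i,
      Nat.card_congr (Equiv.subtypeEquivRight (q := fun a : {a // ¬R a} => f.1 a = i)
        fun a => by rw [dif_neg a.2]), f.2 i]
    have := hr i
    beta_reduce
    omega
  · rintro ⟨f, -, hfh⟩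
    ext a
    by_cases ha : R a <;> simp [ha, hfh]
  · rintro ⟨f, -⟩
    ext a
    simp [a.2]

end Prescribed

variable [Fintype ι]

theorem HasFiberCards.sum_eq {f : α → ι} {c : ι → ℕ} (hf : HasFiberCards f c) :
    ∑ i, c i = Nat.card α := by
  simp_rw [← hf _, ← Nat.card_sigma, Nat.card_congr (Equiv.sigmaFiberEquiv f)]

theorem exists_hasFiberCards {c : ι → ℕ} (hc : ∑ i, c i = Nat.card α) :
    ∃ f : α → ι, HasFiberCards f c := by
  obtain ⟨e⟩ : Nonempty (α ≃ Σ i, Fin (c i)) := Finite.card_eq.1 (by simp [hc])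
  refine ⟨fun a => (e a).1, fun i => ?_⟩
  rw [Nat.card_congr (e.subtypeEquiv (q := fun x : Σ i, Fin (c i) => x.1 = i) fun _ => Iff.rfl),
    Nat.card_congr (Equiv.sigmaSubtype i), Nat.card_eq_fintype_card, Fintype.card_fin]

/-- The permutations `p` with `f₀ ∘ p = f` form a coset of the stabiliser of `f₀`, whose order is
`∏ i, (c i)!`. -/
theorem natCard_hasFiberCards_mul_prod_factorial {c : ι → ℕ} (hc : ∑ i, c i = Nat.card α) :
    Nat.card {f : α → ι // HasFiberCards f c} * ∏ i, (c i)! = (Nat.card α)! := by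
  classical
  cases nonempty_fintype α
  obtain ⟨f₀, hf₀⟩ := exists_hasFiberCards hc
  let shift (p : Equiv.Perm α) : {f : α → ι // HasFiberCards f c} :=
    ⟨f₀ ∘ p, fun i => (Nat.card_congr (p.subtypeEquiv fun _ => Iff.rfl)).trans (hf₀ i)⟩
  have hfiber (f : {f : α → ι // HasFiberCards f c}) :
      Nat.card {p // shift p = f} = ∏ i, (c i)! := by
    obtain ⟨f, hf⟩ := f
    let τ : Equiv.Perm α := Equiv.ofFiberEquiv fun i =>
      Fintype.equivOfCardEq (α := {a // f a = i}) (β := {a // f₀ a = i})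
        (by rw [← Nat.card_eq_fintype_card, ← Nat.card_eq_fintype_card, hf i, hf₀ i])
    have hτ : f₀ ∘ τ = f := funext (Equiv.ofFiberEquiv_map _)
    calc Nat.card {p // shift p = ⟨f, hf⟩}
        = Nat.card {p : Equiv.Perm α // f₀ ∘ p = f₀} := by
          refine Nat.card_congr ((Equiv.mulRight τ⁻¹).subtypeEquiv fun p => ?_)
          rw [Subtype.ext_iff]
          change f₀ ∘ p = f ↔ _
          rw [← hτ]
          exact (τ.comp_symm_eq _ (f₀ ∘ p)).symm
      _ = ∏ i, (c i)! := by
          rw [Nat.card_eq_fintype_card, DomMulAct.stabilizer_card]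
          exact prod_congr rfl fun i _ => by rw [← Nat.card_eq_fintype_card, hf₀ i]
  calc Nat.card {f : α → ι // HasFiberCards f c} * ∏ i, (c i)!
      = ∑ f, Nat.card {p // shift p = f} := by
        rw [sum_congr rfl fun f _ => hfiber f, sum_const, Finset.card_univ, smul_eq_mul,
          Nat.card_eq_fintype_card]
    _ = (Nat.card α)! := by
      rw [← Nat.card_sigma, Nat.card_congr (Equiv.sigmaFiberEquiv shift), Nat.card_perm]

section Prescribed

variable (R : α → Prop) (h : α → ι)

theorem sum_natCard_and_eq : ∑ i, Nat.card {a // R a ∧ h a = i} = Nat.card {a // R a} :=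
  HasFiberCards.sum_eq (f := fun a : {a // R a} => h a) fun i =>
    Nat.card_congr (Equiv.subtypeSubtypeEquivSubtypeInter R (fun a => h a = i))

theorem natCard_hasFiberCards_eqOn_mul_prod_factorial {c : ι → ℕ}
    (hr : ∀ i, Nat.card {a // R a ∧ h a = i} ≤ c i) (hc : ∑ i, c i = Nat.card α) :
    Nat.card {f : α → ι // HasFiberCards f c ∧ ∀ a, R a → f a = h a} *
        ∏ i, (c i - Nat.card {a // R a ∧ h a = i})! =
      (Nat.card α - Nat.card {a // R a})! := by
  rw [natCard_hasFiberCards_eqOn R h hr, natCard_hasFiberCards_mul_prod_factorial,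
    natCard_subtype_not]
  rw [sum_tsub_distrib _ fun i _ => hr i, hc, sum_natCard_and_eq, natCard_subtype_not]

theorem natCard_hasFiberCards_eqOn_mul_le {c : ι → ℕ} {C : ℕ} (hC : ∀ i, c i ≤ C) :
    Nat.card {f : α → ι // HasFiberCards f c ∧ ∀ a, R a → f a = h a} * (∏ i, (c i)!) *
        (Nat.card α - Nat.card {a // R a} + 1) ^ Nat.card {a // R a} ≤
      (Nat.card α)! * C ^ Nat.card {a // R a} := by
  rcases isEmpty_or_nonempty {f : α → ι // HasFiberCards f c ∧ ∀ a, R a → f a = h a}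
    with hL | ⟨f₀, hf₀, hf₀h⟩
  · simp
  set N := Nat.card α
  set m := Nat.card {a // R a}
  set r := fun i => Nat.card {a // R a ∧ h a = i}
  have hr (i : ι) : r i ≤ c i := by
    rw [← hf₀ i, natCard_fiber_eq_add_of_eqOn R h hf₀h i]
    exact Nat.le_add_right _ _
  have hprod : ∏ i, (c i)! = (∏ i, (c i - r i)!) * ∏ i, (c i).descFactorial (r i) := by
    rw [← prod_mul_distrib]
    exact prod_congr rfl fun i _ => (factorial_mul_descFactorial (hr i)).symm
  have hdesc : ∏ i, (c i).descFactorial (r i) ≤ C ^ m :=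
    calc ∏ i, (c i).descFactorial (r i) ≤ ∏ i, C ^ r i :=
          prod_le_prod' fun i _ => (descFactorial_le_pow _ _).trans (Nat.pow_le_pow_left (hC i) _)
      _ = C ^ m := by rw [prod_pow_eq_pow_sum, sum_natCard_and_eq]
  have hfact : (N - m)! * (N - m + 1) ^ m ≤ N ! := by
    have := factorial_mul_pow_le_factorial (m := N - m) (n := m)
    rwa [Nat.sub_add_cancel (Finite.card_subtype_le R)] at this
  calc Nat.card {f : α → ι // HasFiberCards f c ∧ ∀ a, R a → f a = h a} * (∏ i, (c i)!) *
        (N - m + 1) ^ m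
      = Nat.card {f : α → ι // HasFiberCards f c ∧ ∀ a, R a → f a = h a} *
          (∏ i, (c i - r i)!) * (N - m + 1) ^ m * ∏ i, (c i).descFactorial (r i) := by
        rw [hprod]
        ring
    _ = (N - m)! * (N - m + 1) ^ m * ∏ i, (c i).descFactorial (r i) := by
        rw [natCard_hasFiberCards_eqOn_mul_prod_factorial R h hr hf₀.sum_eq]
    _ ≤ N ! * C ^ m := Nat.mul_le_mul hfact hdesc

end Prescribed

end FiberCards

theorem sum_card_le_card_biUnion_add_sum_card_inter {ι γ : Type*} [DecidableEq ι]
    [DecidableEq γ] (S : Finset ι) (A : ι → Finset γ) :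
    ∑ s ∈ S, #(A s) ≤ #(S.biUnion A) + ∑ s ∈ S, ∑ t ∈ S.erase s, #(A s ∩ A t) := by
  induction S using Finset.induction_on with
  | empty => simp
  | insert a S ha ih =>
    have hinter : #(A a ∩ S.biUnion A) ≤ ∑ t ∈ S, #(A a ∩ A t) := by
      rw [inter_biUnion]
      exact card_biUnion_le
    have hpairs : ∑ s ∈ S, ∑ t ∈ S.erase s, #(A s ∩ A t) ≤
        ∑ s ∈ S, ∑ t ∈ (insert a S).erase s, #(A s ∩ A t) :=
      sum_le_sum fun s _ => sum_le_sum_of_subset (erase_subset_erase _ (subset_insert _ _))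
    have hunion := card_union_add_card_inter (A a) (S.biUnion A)
    rw [sum_insert ha, sum_insert ha, biUnion_insert, erase_insert ha]
    omega

theorem sub_one_pow_mul_sub_one_pow_le {n m : ℕ} (hn : 2 ≤ n) (hm : n - 1 ≤ m) (hmn : m ≤ n) :
    (n - 1) ^ (n - 1) * (n - 1) ^ m ≤ (n ^ 2 - n - m + 1) ^ m := by
  have hsq : n ^ 2 = (n - 1) ^ 2 + 2 * (n - 1) + 1 := by
    obtain ⟨k, rfl⟩ : ∃ k, n = k + 1 := ⟨n - 1, by omega⟩
    simp only [Nat.add_sub_cancel]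
    ring
  calc (n - 1) ^ (n - 1) * (n - 1) ^ m ≤ (n - 1) ^ (2 * m) := by
        rw [← pow_add]
        exact Nat.pow_le_pow_right (by omega) (by omega)
    _ = ((n - 1) ^ 2) ^ m := by rw [pow_mul]
    _ ≤ (n ^ 2 - n - m + 1) ^ m := Nat.pow_le_pow_left (by omega) _

theorem sq_le_four_mul_sub_one_pow {n : ℕ} (hn : 4 ≤ n) : n ^ 2 ≤ 4 * (n - 1) ^ (n - 1) := by
  obtain ⟨k, rfl⟩ : ∃ k, n = k + 4 := ⟨n - 4, by omega⟩
  calc (k + 4) ^ 2 ≤ 4 * (k + 3) ^ 3 := by nlinarith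
    _ ≤ 4 * (k + 3) ^ (k + 3) := Nat.mul_le_mul_left _ (Nat.pow_le_pow_right (by omega) (by omega))

section Lines

variable {n : ℕ}

/-- `lineCoords d p` is `(index of the line through p, position of p on that line)`, where the
lines are the rows for `d = false` and the columns for `d = true`. -/
def lineCoords (d : Bool) : Fin n × Fin n ≃ Fin n × Fin n :=
  cond d (Equiv.prodComm _ _) (Equiv.refl _)

def consecPerm (o : Bool) : Equiv.Perm (Fin n) :=
  cond o Fin.revPerm (Equiv.refl _)

def OnLine (d : Bool) (i : Fin n) (p : Fin n × Fin n) : Prop :=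
  (lineCoords d p).1 = i

/-- `ConsecLine (d, o, i) f`: the `i`-th line in direction `d` of the square `f` reads
`0, 1, …, n - 1` (`o = false`) or its reverse (`o = true`). -/
def ConsecLine (s : Bool × Bool × Fin n) (f : Fin n × Fin n → Fin n) : Prop :=
  ∀ p, OnLine s.1 s.2.2 p → f p = consecPerm s.2.1 (lineCoords s.1 p).2

theorem natCard_onLine (d : Bool) (i : Fin n) : Nat.card {p // OnLine d i p} = n := by
  unfold OnLine
  rw [Nat.card_congr ((lineCoords d).subtypeEquiv (q := fun q => q.1 = i) fun _ => Iff.rfl),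
    Nat.card_congr (Equiv.prodSubtypeFstEquivSubtypeProd (p := (· = i)))]
  simp

theorem natCard_onLine_and_consecPerm_eq (d o : Bool) (i k : Fin n) :
    Nat.card {p // OnLine d i p ∧ consecPerm o (lineCoords d p).2 = k} = 1 := by
  unfold OnLine
  rw [Nat.card_congr ((lineCoords d).subtypeEquiv
    (q := fun q => q.1 = i ∧ consecPerm o q.2 = k) fun _ => Iff.rfl), Nat.card_eq_one_iff_exists]
  refine ⟨⟨(i, (consecPerm o).symm k), rfl, by simp⟩, ?_⟩
  rintro ⟨⟨a, b⟩, rfl, hb⟩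
  simp [← hb]

theorem natCard_onLine_and_onLine_le_one {d d' : Bool} {i i' : Fin n} (h : (d, i) ≠ (d', i')) :
    Nat.card {p // OnLine d i p ∧ OnLine d' i' p} ≤ 1 := by
  rw [Finite.card_le_one_iff_subsingleton]
  constructor
  rintro ⟨⟨a, b⟩, hp, hp'⟩ ⟨⟨a', b'⟩, hq, hq'⟩
  rw [Subtype.mk.injEq, Prod.mk.injEq]
  simp only [OnLine, lineCoords] at hp hp' hq hq'
  cases d <;> cases d' <;> simp_all

theorem ConsecLine.orient_eq {d o o' : Bool} {i : Fin n} {f : Fin n × Fin n → Fin n}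
    (hn : 2 ≤ n) (h : ConsecLine (d, o, i) f) (h' : ConsecLine (d, o', i) f) : o = o' := by
  set p := (lineCoords d).symm (i, ⟨0, by omega⟩)
  have hp : OnLine d i p := by simp [OnLine, p]
  have := (h p hp).symm.trans (h' p hp)
  cases o <;> cases o' <;> simp_all [consecPerm, p, Fin.ext_iff] <;> omega

theorem consecLine_row_iff (o : Bool) (i : Fin n) (g : Fin n → Fin n → Fin n) :
    ConsecLine (false, o, i) (Function.uncurry g) ↔ ∀ j, g i j = consecPerm o j :=
  ⟨fun h j => h (i, j) rfl, fun h ⟨_, j⟩ (hp : _ = i) => hp ▸ h j⟩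

theorem consecLine_col_iff (o : Bool) (j : Fin n) (g : Fin n → Fin n → Fin n) :
    ConsecLine (true, o, j) (Function.uncurry g) ↔ ∀ i, g i j = consecPerm o i :=
  ⟨fun h i => h (i, j) rfl, fun h ⟨i, _⟩ (hp : _ = j) => hp ▸ h i⟩

theorem val_add_val_add_one_eq_iff_eq_rev (a b : Fin n) :
    (a : ℕ) + b + 1 = n ↔ a = Fin.rev b := by
  rw [Fin.ext_iff, Fin.val_rev]
  omega

theorem isConsecEquiSquare_iff (g : Fin n → Fin n → Fin n) :
    IsConsecEquiSquare n g ↔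
      HasFiberCards (Function.uncurry g) (fun _ => n) ∧ ∃ s, ConsecLine s (Function.uncurry g) := by
  refine and_congr Iff.rfl ?_
  simp only [Prod.exists, Bool.exists_bool, consecLine_row_iff, consecLine_col_iff, consecPerm,
    cond_false, cond_true, Equiv.refl_apply, Fin.revPerm_apply, RowConsec, RowRevConsec,
    ColConsec, ColRevConsec, val_add_val_add_one_eq_iff_eq_rev, exists_or]
  tauto

end Lines

section Counting

variable {n : ℕ}

theorem natCard_consecLine_mul (s : Bool × Bool × Fin n) :
    Nat.card {f : Fin n × Fin n → Fin n // HasFiberCards f (fun _ => n) ∧ ConsecLine s f} *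
      (n - 1)! ^ n = (n ^ 2 - n)! := by
  obtain ⟨d, o, i⟩ := s
  have h := natCard_hasFiberCards_eqOn_mul_prod_factorial (OnLine d i)
    (fun p => consecPerm o (lineCoords d p).2) (c := fun _ => n)
    (fun k => (natCard_onLine_and_consecPerm_eq d o i k).trans_le i.pos) (by simp)
  simp only [natCard_onLine_and_consecPerm_eq, natCard_onLine, prod_const, Finset.card_univ,
    Fintype.card_fin, Nat.card_eq_fintype_card, Fintype.card_prod] at h
  rw [sq]
  exact h

theorem natCard_consecLine_consecLine_mul_le (hn : 2 ≤ n) {s t : Bool × Bool × Fin n}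
    (hst : s ≠ t) :
    Nat.card {f : Fin n × Fin n → Fin n //
        HasFiberCards f (fun _ => n) ∧ ConsecLine s f ∧ ConsecLine t f} *
      (n - 1)! ^ n * (n - 1) ^ (n - 1) ≤ (n ^ 2 - n)! := by
  obtain ⟨d, o, i⟩ := s
  obtain ⟨d', o', i'⟩ := t
  by_cases hℓ : (d, i) = (d', i')
  · obtain ⟨rfl, rfl⟩ := Prod.mk.inj hℓ
    have : IsEmpty {f : Fin n × Fin n → Fin n //
        HasFiberCards f (fun _ => n) ∧ ConsecLine (d, o, i) f ∧ ConsecLine (d, o', i) f} :=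
      ⟨fun f => hst (by rw [f.2.2.1.orient_eq hn f.2.2.2])⟩
    simp
  have hN : Nat.card {p // ¬OnLine d i p} = n ^ 2 - n := by
    rw [natCard_subtype_not, natCard_onLine, Nat.card_prod, Nat.card_fin, sq]
  have hL := natCard_hasFiberCards_eqOn_mul_le (fun q : {p // ¬OnLine d i p} => OnLine d' i' q.1)
    (fun q => consecPerm o' (lineCoords d' q.1).2) (c := fun _ => n - 1) (fun _ => le_rfl)
  set m := Nat.card {q : {p // ¬OnLine d i p} // OnLine d' i' q.1}
  have hm : n - 1 ≤ m ∧ m ≤ n := by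
    have := natCard_subtype_eq_add (OnLine d i) (OnLine d' i')
    have := natCard_onLine_and_onLine_le_one hℓ
    rw [natCard_onLine] at *
    omega
  rw [hN, prod_const, Finset.card_univ, Fintype.card_fin] at hL
  have hres : Nat.card {f : Fin n × Fin n → Fin n //
        HasFiberCards f (fun _ => n) ∧ ConsecLine (d, o, i) f ∧ ConsecLine (d', o', i') f} ≤
      Nat.card {f : {p // ¬OnLine d i p} → Fin n // HasFiberCards f (fun _ => n - 1) ∧
        ∀ q, OnLine d' i' q.1 → f q = consecPerm o' (lineCoords d' q.1).2} := by
    refine Nat.card_le_card_of_injective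
      (fun f => ⟨fun q => f.1 q,
        by simpa only [natCard_onLine_and_consecPerm_eq] using f.2.1.restrict f.2.2.1,
        fun q hq => f.2.2.2 q hq⟩) ?_
    intro f f' hff'
    refine Subtype.ext (funext fun p => ?_)
    by_cases hp : OnLine d i p
    · rw [f.2.2.1 p hp, f'.2.2.1 p hp]
    · exact congrFun (congrArg Subtype.val hff') ⟨p, hp⟩
  refine Nat.le_of_mul_le_mul_right ?_ (pow_pos (by omega : 0 < n - 1) m)
  calc _ ≤ Nat.card {f : {p // ¬OnLine d i p} → Fin n // HasFiberCards f (fun _ => n - 1) ∧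
        ∀ q, OnLine d' i' q.1 → f q = consecPerm o' (lineCoords d' q.1).2} * (n - 1)! ^ n *
          (n ^ 2 - n - m + 1) ^ m := by
        rw [mul_assoc _ ((n - 1) ^ (n - 1))]
        exact Nat.mul_le_mul (Nat.mul_le_mul_right _ hres)
          (sub_one_pow_mul_sub_one_pow_le hn hm.1 hm.2)
    _ ≤ (n ^ 2 - n)! * (n - 1) ^ m := hL

open Classical in
noncomputable def consecLineSquares (n : ℕ) (s : Bool × Bool × Fin n) :
    Finset (Fin n × Fin n → Fin n) :=
  {f | HasFiberCards f (fun _ => n) ∧ ConsecLine s f}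

theorem card_consecLineSquares (s : Bool × Bool × Fin n) :
    #(consecLineSquares n s) =
      Nat.card {f : Fin n × Fin n → Fin n // HasFiberCards f (fun _ => n) ∧ ConsecLine s f} := by
  rw [← Nat.card_eq_finsetCard]
  exact Nat.card_congr (Equiv.subtypeEquivRight fun f => by simp [consecLineSquares])

theorem card_inter_consecLineSquares (s t : Bool × Bool × Fin n) :
    #(consecLineSquares n s ∩ consecLineSquares n t) =
      Nat.card {f : Fin n × Fin n → Fin n //
        HasFiberCards f (fun _ => n) ∧ ConsecLine s f ∧ ConsecLine t f} := by
  rw [← Nat.card_eq_finsetCard]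
  exact Nat.card_congr (Equiv.subtypeEquivRight fun f => by simp [consecLineSquares]; tauto)

theorem natCard_consecEquiSquares :
    Nat.card {g // IsConsecEquiSquare n g} = #(univ.biUnion (consecLineSquares n)) := by
  classical
  rw [Nat.card_congr ((Equiv.curry _ _ _).symm.subtypeEquiv
      (q := fun f => HasFiberCards f (fun _ => n) ∧ ∃ s, ConsecLine s f) isConsecEquiSquare_iff),
    Nat.card_eq_fintype_card, Fintype.card_subtype]
  congr 1
  ext f
  simp [consecLineSquares]

theorem sum_card_consecLineSquares_mul :
    (∑ s, #(consecLineSquares n s)) * (n - 1)! ^ n = 4 * n * (n ^ 2 - n)! := by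
  simp only [sum_mul, card_consecLineSquares, natCard_consecLine_mul, sum_const, Finset.card_univ,
    Fintype.card_prod, Fintype.card_bool, Fintype.card_fin, smul_eq_mul]
  ring

theorem natCard_consecEquiSquares_mul_le (n : ℕ) :
    Nat.card {g // IsConsecEquiSquare n g} * (n - 1)! ^ n ≤ 4 * n * (n ^ 2 - n)! := by
  rw [natCard_consecEquiSquares, ← sum_card_consecLineSquares_mul]
  exact Nat.mul_le_mul_right _ card_biUnion_le

theorem four_mul_le_natCard_consecEquiSquares_mul_add (hn : 4 ≤ n) :
    4 * n * (n ^ 2 - n)! ≤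
      Nat.card {g // IsConsecEquiSquare n g} * (n - 1)! ^ n + 64 * (n ^ 2 - n)! := by
  classical
  set A := consecLineSquares n
  set W := (n - 1)! ^ n
  set F := (n ^ 2 - n)!
  set Q := (n - 1) ^ (n - 1)
  have hpairs : (∑ s, ∑ t ∈ univ.erase s, #(A s ∩ A t)) * W * Q ≤ 16 * n ^ 2 * F := by
    have hterm (s t) (hst : t ∈ univ.erase s) : #(A s ∩ A t) * W * Q ≤ F := by
      rw [card_inter_consecLineSquares]
      exact natCard_consecLine_consecLine_mul_le (by omega) (ne_of_mem_erase hst).symm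
    calc (∑ s, ∑ t ∈ univ.erase s, #(A s ∩ A t)) * W * Q
        = ∑ s, ∑ t ∈ univ.erase s, #(A s ∩ A t) * W * Q := by simp only [sum_mul]
      _ ≤ ∑ s : Bool × Bool × Fin n, ∑ t ∈ univ.erase s, F :=
          sum_le_sum fun s _ => sum_le_sum (hterm s)
      _ ≤ ∑ s : Bool × Bool × Fin n, 4 * n * F := sum_le_sum fun s _ => by
          rw [sum_const, smul_eq_mul]
          exact Nat.mul_le_mul_right _ (card_erase_le.trans_eq (by simp; ring))
      _ = 16 * n ^ 2 * F := by simp; ring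
  have hQ : n ^ 2 ≤ 4 * Q := sq_le_four_mul_sub_one_pow hn
  rw [natCard_consecEquiSquares]
  refine Nat.le_of_mul_le_mul_right (c := Q) ?_ (pow_pos (by omega : 0 < n - 1) _)
  calc 4 * n * F * Q = (∑ s, #(A s)) * W * Q := by rw [sum_card_consecLineSquares_mul]
    _ ≤ (#(univ.biUnion A) + ∑ s, ∑ t ∈ univ.erase s, #(A s ∩ A t)) * W * Q := by
        gcongr
        exact sum_card_le_card_biUnion_add_sum_card_inter univ A
    _ ≤ #(univ.biUnion A) * W * Q + 16 * n ^ 2 * F := by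
        rw [add_mul, add_mul]
        gcongr
    _ ≤ (#(univ.biUnion A) * W + 64 * F) * Q := by nlinarith [Nat.mul_le_mul_left (16 * F) hQ]

end Counting

/-- `|Σ_n| ∼ 4n·(n²−n)!/((n−1)!)^n` as `n → ∞`: the ratio tends to `1`. -/
theorem card_consecEquiSquares_asymp :
    Filter.Tendsto
      (fun n : ℕ =>
        (Nat.card {g : Fin n → Fin n → Fin n // IsConsecEquiSquare n g} : ℝ) *
            ((n - 1)! : ℝ) ^ n / (4 * (n : ℝ) * ((n ^ 2 - n)! : ℝ)))
      Filter.atTop (nhds 1) := by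
  refine tendsto_of_tendsto_of_tendsto_of_le_of_le' (g := fun n : ℕ => 1 - 16 / (n : ℝ))
    (by simpa using (tendsto_const_div_atTop_nhds_zero_nat (16 : ℝ)).const_sub 1)
    tendsto_const_nhds ?_ (Eventually.of_forall fun n => ?_)
  · filter_upwards [eventually_ge_atTop 4] with n hn
    have hn0 : (0 : ℝ) < n := by exact_mod_cast (show 0 < n by omega)
    have hlow : (4 * n * (n ^ 2 - n)! : ℝ) ≤
        Nat.card {g // IsConsecEquiSquare n g} * (n - 1)! ^ n + 64 * (n ^ 2 - n)! := by
      exact_mod_cast four_mul_le_natCard_consecEquiSquares_mul_add hn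
    rw [le_div_iff₀ (by positivity)]
    field_simp
    nlinarith
  · exact div_le_one_of_le₀ (by exact_mod_cast natCard_consecEquiSquares_mul_le n) (by positivity)
end

section
/- Let n ≥ 1 and let x be an integer with 4 < x ≤ n. The number of equi-n-squares ω with X_n(ω) = x, i.e. with exactly x consecutive or reverse-consecutive lines (rows plus columns), equals 2^{x+1} · C(n,x) · Σ_{k=0}^{n−x} (−2)^k · C(n−x,k) · (n²−n·x−n·k)! / ((n−x−k)!)^n, as an equality of rational numbers. -/
open Nat Finset Filter

/-- `X_n(g)`: the number of consecutive or reverse-consecutive lines (rows plus columns)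
of the array `g`. -/
noncomputable def consecLineCount {n : ℕ} (g : Fin n → Fin n → Fin n) : ℕ :=
  Nat.card {i : Fin n // RowConsec g i ∨ RowRevConsec g i} +
    Nat.card {j : Fin n // ColConsec g j ∨ ColRevConsec g j}

/-!
Call a row or column a line if it is consecutive or reverse-consecutive; as a function it is then
the permutation `id` or `Fin.rev`. A line row `i` and a line column `j` meet in an entry lying both in
`{j, rev j}` and in `{i, rev i}`, so `i ∈ {j, rev j}`: three line rows exclude every line
column. Since `x > 4`, the `x` lines are therefore all rows or all columns, and transposition
contributes the factor `2`. Prescribing `m` rows to be given permutations leaves `n - m` rows in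
which every value has to appear exactly `n - m` times, a multinomial count
`(n (n - m))! / ((n - m)!)^n`; each prescribed line row has two choices. Inclusion–exclusion over
the rows outside a fixed set of `x` line rows turns these "at least" counts into the exact count.
-/

theorem card_fiberCard_eq_mul_prod_factorial {α ι : Type*} [Fintype α] [DecidableEq α]
    [Fintype ι] [DecidableEq ι] (f₀ : α → ι) :
    Nat.card {f : α → ι // ∀ i, Nat.card {a // f a = i} = Nat.card {a // f₀ a = i}} *
      ∏ i, (Nat.card {a // f₀ a = i})! = (Nat.card α)! := by
  have horbit : MulAction.orbit (Equiv.Perm α)ᵈᵐᵃ f₀ =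
      {f | ∀ i, Nat.card {a // f a = i} = Nat.card {a // f₀ a = i}} := by
    ext f
    simp only [MulAction.mem_orbit_iff, Set.mem_ofPred_eq]
    constructor
    · rintro ⟨σ, rfl⟩ i
      exact Nat.card_congr (Equiv.subtypeEquiv (DomMulAct.mk.symm σ) fun a => Iff.rfl)
    · intro hf
      have e : ∀ i, {a // f a = i} ≃ {a // f₀ a = i} := fun i =>
        (Finite.card_eq.mp (hf i)).some
      exact ⟨DomMulAct.mk (Equiv.ofFiberEquiv e), funext (Equiv.ofFiberEquiv_map e)⟩
  have hstab : Nat.card (MulAction.stabilizer (Equiv.Perm α)ᵈᵐᵃ f₀) =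
      ∏ i, (Nat.card {a // f₀ a = i})! := by
    rw [Nat.card_congr (Equiv.subtypeEquiv (p := (· ∈ MulAction.stabilizer _ f₀))
      (q := fun σ : Equiv.Perm α => f₀ ∘ σ = f₀) DomMulAct.mk.symm
      fun _ => DomMulAct.mem_stabilizer_iff), Nat.card_eq_fintype_card, DomMulAct.stabilizer_card]
    simp only [Nat.card_eq_fintype_card]
  have key := Subgroup.card_mul_index (MulAction.stabilizer (Equiv.Perm α)ᵈᵐᵃ f₀)
  rw [MulAction.index_stabilizer, horbit, hstab, ← Nat.card_congr DomMulAct.mk, Nat.card_perm]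
    at key
  rw [← key, mul_comm]
  rfl

theorem natCard_fiber_uncurry_eq_card_add {ι γ β : Type*} [Fintype ι] [DecidableEq ι]
    [Fintype γ] (g : ι → γ → β) (T : Finset ι) (hT : ∀ i ∈ T, (g i).Bijective)
    (v : β) :
    Nat.card {p : ι × γ // g p.1 p.2 = v} =
      #T + Nat.card {p : ↥Tᶜ × γ // g p.1 p.2 = v} := by
  have hsum {κ : Type _} [Fintype κ] (h : κ → γ → β) :
      Nat.card {p : κ × γ // h p.1 p.2 = v} = ∑ k, Nat.card {j // h k j = v} := by
    rw [Nat.card_congr (Equiv.subtypeProdEquivSigmaSubtype fun k j => h k j = v), Nat.card_sigma]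
  have hrow : ∀ i ∈ T, Nat.card {j // g i j = v} = 1 := fun i hi =>
    (Nat.card_congr ((Equiv.ofBijective _ (hT i hi)).subtypeEquiv (q := (· = v))
      fun _ => Iff.rfl)).trans Nat.card_unique
  rw [hsum g, hsum fun i : ↥Tᶜ => g i, sum_coe_sort Tᶜ (fun i => Nat.card {j // g i j = v}),
    ← sum_add_sum_compl T, sum_congr rfl hrow, sum_const, smul_eq_mul, mul_one]

section

open scoped Classical

variable {n : ℕ}

theorem card_isEquiSquare_rows_eq_mul (T : Finset (Fin n)) (σ : T → Equiv.Perm (Fin n)) :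
    #{g | IsEquiSquare n g ∧ ∀ i : T, g i = σ i} * ((n - #T)!) ^ n = (n * (n - #T))! := by
  let restrict :
      {g : Fin n → Fin n → Fin n // ∀ i : T, g i = σ i} ≃ (↥Tᶜ × Fin n → Fin n) :=
    { toFun g p := g.1 p.1 p.2
      invFun h := ⟨fun i j =>
          if hi : i ∈ T then σ ⟨i, hi⟩ j else h (⟨i, mem_compl.2 hi⟩, j),
        fun i => by ext j; simp [i.2]⟩
      left_inv g := by
        ext i j
        by_cases hi : i ∈ T
        · simp [hi, g.2 ⟨i, hi⟩]
        · simp [hi]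
      right_inv h := by
        ext ⟨⟨i, hi⟩, j⟩
        simp [mem_compl.1 hi] }
  have hsnd (v : Fin n) : Nat.card {p : ↥Tᶜ × Fin n // p.2 = v} = n - #T := by
    rw [Nat.card_congr ⟨fun p => p.1.1, fun a => ⟨(a, v), rfl⟩,
      fun ⟨⟨_, _⟩, h⟩ => by subst h; rfl, fun _ => rfl⟩]
    simp
  have hequi (g : {g : Fin n → Fin n → Fin n // ∀ i : T, g i = σ i}) :
      IsEquiSquare n g.1 ↔
        ∀ v, Nat.card {p // restrict g p = v} = n - #T := by
    have hfiber := natCard_fiber_uncurry_eq_card_add g.1 T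
      (fun i hi => g.2 ⟨i, hi⟩ ▸ (σ _).bijective)
    refine forall_congr' fun v => ?_
    rw [hfiber]
    have : #T ≤ n := by simpa using card_le_univ T
    change _ ↔ Nat.card {p : ↥Tᶜ × Fin n // g.1 p.1 p.2 = v} = n - #T
    omega
  have hcard : #{g | IsEquiSquare n g ∧ ∀ i : T, g i = σ i} =
      Nat.card {h : ↥Tᶜ × Fin n → Fin n // ∀ v, Nat.card {p // h p = v} = n - #T} := by
    rw [← Fintype.card_subtype, ← Nat.card_eq_fintype_card]
    exact Nat.card_congr (((Equiv.subtypeEquivRight fun _ => and_comm).trans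
      (Equiv.subtypeSubtypeEquivSubtypeInter _ (IsEquiSquare n)).symm).trans
        (Equiv.subtypeEquiv restrict hequi))
  have hcount := card_fiberCard_eq_mul_prod_factorial (Prod.snd : ↥Tᶜ × Fin n → Fin n)
  simp only [hsnd, prod_const, Finset.card_univ, Fintype.card_fin] at hcount
  rw [hcard]
  simpa [Finset.card_compl, mul_comm] using hcount

theorem card_isEquiSquare_rows_mem_mul (T : Finset (Fin n)) (P : Finset (Equiv.Perm (Fin n))) :
    #{g | IsEquiSquare n g ∧ ∀ i ∈ T, ∃ p ∈ P, g i = p} * ((n - #T)!) ^ n =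
      #P ^ #T * (n * (n - #T))! := by
  have hunion : ({g | IsEquiSquare n g ∧ ∀ i ∈ T, ∃ p ∈ P, g i = p} : Finset _) =
      (Fintype.piFinset fun _ : T => P).biUnion
        fun σ => {g | IsEquiSquare n g ∧ ∀ i : T, g i = σ i} := by
    ext g
    simp only [mem_filter, mem_univ, true_and, mem_biUnion, Fintype.mem_piFinset]
    constructor
    · rintro ⟨hg, hrows⟩
      choose σ hσP hσ using fun i : T => hrows i i.2
      exact ⟨σ, hσP, hg, hσ⟩
    · rintro ⟨σ, hσP, hg, hσ⟩
      exact ⟨hg, fun i hi => ⟨σ ⟨i, hi⟩, hσP _, hσ ⟨i, hi⟩⟩⟩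
  have hdisj : (Fintype.piFinset fun _ : T => P : Set (T → Equiv.Perm (Fin n))).PairwiseDisjoint
      fun σ => ({g | IsEquiSquare n g ∧ ∀ i : T, g i = σ i} : Finset _) := by
    intro σ _ τ _ hστ
    obtain ⟨i, hi⟩ := Function.ne_iff.1 hστ
    refine disjoint_left.2 fun g hσ hτ => hi (DFunLike.coe_injective ?_)
    exact ((mem_filter.1 hσ).2.2 i).symm.trans ((mem_filter.1 hτ).2.2 i)
  rw [hunion, card_biUnion hdisj, sum_mul,
    sum_congr rfl fun σ _ => card_isEquiSquare_rows_eq_mul T σ, sum_const, Fintype.card_piFinset,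
    prod_const, Finset.card_univ, Fintype.card_coe, smul_eq_mul]

noncomputable def lineRows (g : Fin n → Fin n → Fin n) : Finset (Fin n) :=
  {i | RowConsec g i ∨ RowRevConsec g i}

theorem mem_lineRows {g : Fin n → Fin n → Fin n} {i : Fin n} :
    i ∈ lineRows g ↔ RowConsec g i ∨ RowRevConsec g i := by
  simp [lineRows]

theorem mem_lineRows_iff {g : Fin n → Fin n → Fin n} {i : Fin n} :
    i ∈ lineRows g ↔ g i = id ∨ g i = Fin.rev := by
  have hrev : RowRevConsec g i ↔ g i = Fin.rev := by
    simp only [RowRevConsec, funext_iff, Fin.ext_iff, Fin.val_rev]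
    exact forall_congr' fun j => by omega
  exact mem_lineRows.trans (or_congr funext_iff.symm hrev)

theorem mem_lineRows_iff_exists_perm {g : Fin n → Fin n → Fin n} {i : Fin n} :
    i ∈ lineRows g ↔ ∃ p ∈ ({1, Fin.revPerm} : Finset (Equiv.Perm (Fin n))), g i = p := by
  simp [mem_lineRows_iff, funext Fin.revPerm_apply]

theorem card_pair_one_revPerm (hn : 2 ≤ n) :
    #({1, Fin.revPerm} : Finset (Equiv.Perm (Fin n))) = 2 := by
  refine card_pair fun h => ?_
  have := congrArg Fin.val (DFunLike.congr_fun h ⟨0, by omega⟩)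
  simp [Fin.val_rev] at this
  omega

theorem eq_or_eq_rev_of_mem_lineRows {g : Fin n → Fin n → Fin n} {i j : Fin n}
    (hi : i ∈ lineRows g) (hj : j ∈ lineRows (Function.swap g)) : i = j ∨ i = j.rev := by
  rcases mem_lineRows_iff.1 hi with hi | hi <;> rcases mem_lineRows_iff.1 hj with hj | hj <;>
    have h := (congrFun hi j).symm.trans (congrFun hj i) <;> grind [Fin.rev_rev]

theorem card_isEquiSquare_lineRows_superset (hn : 2 ≤ n) (T : Finset (Fin n)) :
    (#{g | IsEquiSquare n g ∧ T ⊆ lineRows g} : ℚ) =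
      2 ^ #T * (n * (n - #T))! / ((n - #T)! : ℚ) ^ n := by
  have h := card_isEquiSquare_rows_mem_mul T {1, Fin.revPerm}
  simp only [← mem_lineRows_iff_exists_perm, card_pair_one_revPerm hn, ← subset_iff] at h
  rw [eq_div_iff (by positivity)]
  exact_mod_cast h

theorem card_isEquiSquare_lineRows_eq (hn : 2 ≤ n) (S : Finset (Fin n)) :
    (#{g | IsEquiSquare n g ∧ lineRows g = S} : ℚ) =
      2 ^ #S * ∑ k ∈ range (n - #S + 1), (-2 : ℚ) ^ k * ((n - #S).choose k : ℚ) *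
        ((n * (n - #S - k))! : ℚ) / ((n - #S - k)! : ℚ) ^ n := by
  let f : (Fin n → Fin n → Fin n) → ℚ := fun g =>
    if IsEquiSquare n g ∧ S ⊆ lineRows g then 1 else 0
  let F : ℕ → ℚ := fun k =>
    (-1) ^ k * (2 ^ (#S + k) * (n * (n - #S - k))! / ((n - #S - k)! : ℚ) ^ n)
  have hlhs : ∑ g ∈ Sᶜ.inf (fun i => ({g | i ∈ lineRows g} : Finset _)ᶜ), f g =
      #{g | IsEquiSquare n g ∧ lineRows g = S} := by
    rw [sum_boole]
    congr 2
    ext g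
    simp only [mem_filter, mem_inf, mem_compl, mem_univ, true_and]
    have hsub : (∀ i ∉ S, i ∉ lineRows g) ↔ lineRows g ⊆ S :=
      ⟨fun h i hi => not_not.1 fun hiS => h i hiS hi, fun h i hiS hi => hiS (h hi)⟩
    rw [hsub, Subset.antisymm_iff]
    tauto
  have hterm : ∀ t ∈ Sᶜ.powerset,
      (-1 : ℤ) ^ #t • ∑ g ∈ t.inf (fun i => ({g | i ∈ lineRows g} : Finset _)), f g =
        F #t := by
    intro t ht
    have hdisj : Disjoint S t := disjoint_right.2 fun i hit => mem_compl.1 (mem_powerset.1 ht hit)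
    simp only [F, f, sum_boole, zsmul_eq_mul, Nat.sub_sub]
    rw [← card_union_of_disjoint hdisj, ← card_isEquiSquare_lineRows_superset hn]
    push_cast
    congr 3
    ext g
    simp only [mem_filter, mem_inf, mem_univ, true_and]
    rw [union_subset_iff, ← subset_iff]
    tauto
  rw [← hlhs, inclusion_exclusion_sum_inf_compl, sum_congr rfl hterm, sum_powerset_apply_card F,
    card_compl, Fintype.card_fin, mul_sum]
  refine sum_congr rfl fun k _ => ?_
  rw [nsmul_eq_mul, neg_pow (2 : ℚ)]
  ring

theorem card_isEquiSquare_card_lineRows (hn : 2 ≤ n) (x : ℕ) :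
    (#{g | IsEquiSquare n g ∧ #(lineRows g) = x} : ℚ) =
      n.choose x * 2 ^ x * ∑ k ∈ range (n - x + 1), (-2 : ℚ) ^ k * ((n - x).choose k : ℚ) *
        ((n * (n - x - k))! : ℚ) / ((n - x - k)! : ℚ) ^ n := by
  rw [card_eq_sum_card_fiberwise (f := lineRows) (t := powersetCard x univ)
    fun g hg => mem_powersetCard_univ.2 (mem_filter.1 hg).2.2]
  push_cast
  rw [sum_congr rfl fun S hS => ?_, sum_const, card_powersetCard, Finset.card_univ,
    Fintype.card_fin, nsmul_eq_mul, mul_assoc]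
  rw [filter_filter, ← (mem_powersetCard_univ.1 hS), ← card_isEquiSquare_lineRows_eq hn]
  congr 3
  ext g
  constructor
  · rintro ⟨⟨hg, -⟩, hS⟩
    exact ⟨hg, hS⟩
  · rintro ⟨hg, rfl⟩
    exact ⟨⟨hg, rfl⟩, rfl⟩

theorem consecLineCount_eq (g : Fin n → Fin n → Fin n) :
    consecLineCount g = #(lineRows g) + #(lineRows (Function.swap g)) := by
  simp only [consecLineCount, Nat.card_eq_fintype_card, Fintype.card_subtype, lineRows]
  rfl

theorem IsEquiSquare.swap {g : Fin n → Fin n → Fin n} (hg : IsEquiSquare n g) :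
    IsEquiSquare n (Function.swap g) := fun k =>
  (Nat.card_congr (Equiv.subtypeEquiv (Equiv.prodComm _ _) fun _ => Iff.rfl)).trans (hg k)

theorem isEquiSquare_swap_iff {g : Fin n → Fin n → Fin n} :
    IsEquiSquare n (Function.swap g) ↔ IsEquiSquare n g :=
  ⟨IsEquiSquare.swap, IsEquiSquare.swap⟩

theorem lineRows_swap_eq_empty {g : Fin n → Fin n → Fin n} (h : 3 ≤ #(lineRows g)) :
    lineRows (Function.swap g) = ∅ := by
  refine eq_empty_of_forall_notMem fun j hj => ?_
  have hsub : lineRows g ⊆ {j, j.rev} := fun i hi => by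
    simpa using eq_or_eq_rev_of_mem_lineRows hi hj
  have := (card_le_card hsub).trans card_le_two
  omega

theorem consecLineCount_eq_iff {g : Fin n → Fin n → Fin n} {x : ℕ} (hx : 4 < x) :
    consecLineCount g = x ↔ #(lineRows g) = x ∨ #(lineRows (Function.swap g)) = x := by
  have hrow (g : Fin n → Fin n → Fin n) (h : 3 ≤ #(lineRows g)) :=
    card_eq_zero.2 (lineRows_swap_eq_empty h)
  rw [consecLineCount_eq]
  constructor
  · intro h
    by_cases h3 : 3 ≤ #(lineRows g)
    · have := hrow g h3
      omega
    · have : #(lineRows g) = 0 := hrow (Function.swap g) (by omega)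
      omega
  · rintro (h | h)
    · have := hrow g (by omega)
      omega
    · have : #(lineRows g) = 0 := hrow (Function.swap g) (by omega)
      omega

theorem card_isEquiSquare_consecLineCount {x : ℕ} (hx : 4 < x) :
    #{g | IsEquiSquare n g ∧ consecLineCount g = x} =
      2 * #{g : Fin n → Fin n → Fin n | IsEquiSquare n g ∧ #(lineRows g) = x} := by
  set A : Finset (Fin n → Fin n → Fin n) := {g | IsEquiSquare n g ∧ #(lineRows g) = x}
  have hunion : ({g | IsEquiSquare n g ∧ consecLineCount g = x} : Finset _) =
      A ∪ A.map (Equiv.piComm _).toEmbedding := by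
    ext g
    simp only [A, mem_union, mem_map_equiv, mem_filter, mem_univ, true_and,
      consecLineCount_eq_iff hx]
    rw [show (Equiv.piComm _).symm g = Function.swap g from rfl, isEquiSquare_swap_iff,
      and_or_left]
  have hdisj : Disjoint A (A.map (Equiv.piComm _).toEmbedding) := by
    refine disjoint_left.2 fun g hg hg' => ?_
    rw [mem_map_equiv, mem_filter] at hg'
    have := lineRows_swap_eq_empty (g := g) (by rw [(mem_filter.1 hg).2.2]; omega)
    rw [show (Equiv.piComm _).symm g = Function.swap g from rfl, this, card_empty] at hg'
    omega
  rw [hunion, card_union_of_disjoint hdisj, card_map, two_mul]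

end

theorem card_equiSquares_lineCount_gt_four_general (n x : ℕ) (hx : 4 < x)
    (hxn : x ≤ n) :
    (Nat.card {g : Fin n → Fin n → Fin n //
        IsEquiSquare n g ∧ consecLineCount g = x} : ℚ) =
      2 ^ (x + 1) * (n.choose x : ℚ) *
        ∑ k ∈ Finset.range (n - x + 1), (-2 : ℚ) ^ k * ((n - x).choose k : ℚ) *
          ((n ^ 2 - n * x - n * k)! : ℚ) / ((n - x - k)! : ℚ) ^ n := by
  classical
  have hsq (k : ℕ) : n ^ 2 - n * x - n * k = n * (n - x - k) := by
    rw [Nat.mul_sub, Nat.mul_sub, sq]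
  rw [Nat.card_eq_fintype_card, Fintype.card_subtype, card_isEquiSquare_consecLineCount hx,
    Nat.cast_mul, card_isEquiSquare_card_lineRows (by omega), pow_succ]
  simp only [hsq]
  push_cast
  ring

/-- For `4 < x ≤ n`, the number of equi-`n`-squares with exactly `x` consecutive or
reverse-consecutive lines. -/
theorem card_equiSquares_lineCount_gt_four (n x : ℕ) (hn : 1 ≤ n) (hx : 4 < x)
    (hxn : x ≤ n) :
    (Nat.card {g : Fin n → Fin n → Fin n //
        IsEquiSquare n g ∧ consecLineCount g = x} : ℚ) =
      2 ^ (x + 1) * (n.choose x : ℚ) *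
        ∑ k ∈ Finset.range (n - x + 1), (-2 : ℚ) ^ k * ((n - x).choose k : ℚ) *
          ((n ^ 2 - n * x - n * k)! : ℚ) / ((n - x - k)! : ℚ) ^ n :=
  card_equiSquares_lineCount_gt_four_general n x hx hxn
end

section
/- Let n ≥ 1 and fix a row index i. The number of equi-n-squares whose row i is a permutation of {1,…,n} (i.e. the map j ↦ g i j is a bijection of Fin n) equals n! · (n²−n)! / ((n−1)!)^n. Consequently, the total count over all equi-n-squares ω of the number of lines (rows or columns) of ω that are permutations equals 2n · n! · (n²−n)! / ((n−1)!)^n. -/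
/-!
Splitting off row `i`, an equi-square whose row `i` is a permutation amounts to that permutation
together with a filling of the other `n² - n` cells in which every value occurs `n - 1` times.
The permutations of those cells act transitively on such fillings by precomposition, and the
stabilizer of a filling permutes each of its `n` fibres separately, so it has order
`((n - 1)!)ⁿ`; orbit–stabilizer gives `(n² - n)! / ((n - 1)!)ⁿ` fillings. Transposition turns
columns into rows, so each of the `2n` lines is a permutation in equally many equi-squares.
-/

open Nat Finset Filter

open Equiv MulAction Function

section NatCard

variable {α β γ : Type*}

theorem card_fiber_eq_one_iff (f : α → β) (b : β) :
    Nat.card {a // f a = b} = 1 ↔ ∃! a, f a = b := by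
  rw [Nat.card_eq_one_iff_unique, ← unique_subtype_iff_existsUnique,
    unique_iff_subsingleton_and_nonempty]

theorem bijective_iff_card_fiber_eq_one (f : α → β) :
    Bijective f ↔ ∀ b, Nat.card {a // f a = b} = 1 := by
  simp only [bijective_iff_existsUnique, card_fiber_eq_one_iff]

theorem card_fiber_comp_equiv (f : α → β) (e : γ ≃ α) (b : β) :
    Nat.card {c // f (e c) = b} = Nat.card {a // f a = b} :=
  Nat.card_congr (e.subtypeEquiv fun _ => Iff.rfl)

theorem card_fiber_sumElim [Finite α] [Finite γ] (u : α → β) (v : γ → β) (b : β) :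
    Nat.card {x // Sum.elim u v x = b} =
      Nat.card {a // u a = b} + Nat.card {c // v c = b} := by
  rw [Nat.card_congr subtypeSum, Nat.card_sum]
  rfl

theorem card_subtype_prod_eq_sum [Fintype β] (p : α → β → Prop)
    [∀ b, Finite {a // p a b}] :
    Nat.card {x : α × β // p x.1 x.2} = ∑ b, Nat.card {a // p a b} := by
  rw [← Nat.card_sigma]
  exact Nat.card_congr
    ⟨fun x => ⟨x.1.2, x.1.1, x.2⟩, fun y => ⟨(y.2.1, y.1), y.2.2⟩, fun _ => rfl, fun _ => rfl⟩

end NatCard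

namespace DomMulAct

variable {α β : Type*}

theorem mem_orbit_iff_card_fiber_eq [Finite α] {f f₀ : α → β} :
    f ∈ orbit (Perm α)ᵈᵐᵃ f₀ ↔
      ∀ b, Nat.card {a // f a = b} = Nat.card {a // f₀ a = b} := by
  constructor
  · rintro ⟨σ, rfl⟩ b
    exact card_fiber_comp_equiv f₀ (mk.symm σ) b
  · intro h
    let e b := (Finite.card_eq.mp (h b)).some
    exact ⟨mk (ofFiberEquiv e), funext fun a => ofFiberEquiv_map e a⟩

theorem card_stabilizer_eq_prod_factorial [Finite α] [Fintype β] (f : α → β) :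
    Nat.card (stabilizer (Perm α)ᵈᵐᵃ f) = ∏ b, (Nat.card {a // f a = b})! := by
  rw [Nat.card_congr MulOpposite.opEquiv, Nat.card_congr (stabilizerMulEquiv f).toEquiv,
    Nat.card_pi]
  simp only [Nat.card_perm]

end DomMulAct

theorem card_fun_card_fiber_eq_mul_prod_factorial {α β : Type*} [Finite α] [Fintype β]
    (f₀ : α → β) :
    Nat.card {f : α → β // ∀ b, Nat.card {a // f a = b} = Nat.card {a // f₀ a = b}} *
      ∏ b, (Nat.card {a // f₀ a = b})! = (Nat.card α)! := by
  have horbit : {f : α → β | ∀ b, Nat.card {a // f a = b} = Nat.card {a // f₀ a = b}} =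
      orbit (Perm α)ᵈᵐᵃ f₀ := Set.ext fun _ => DomMulAct.mem_orbit_iff_card_fiber_eq.symm
  rw [← DomMulAct.card_stabilizer_eq_prod_factorial, ← Nat.card_perm,
    Nat.card_congr (DomMulAct.mk (M := Perm α)), ← (stabilizer (Perm α)ᵈᵐᵃ f₀).index_mul_card,
    index_stabilizer, ← horbit, ← Nat.card_coe_set_eq]
  rfl

section SplitOffBijection

variable {β γ : Type*} [Finite β] [Finite γ]

theorem card_bijective_inl_and_card_fiber_eq (m : ℕ) :
    Nat.card {G : β ⊕ γ → β //
        (∀ b, Nat.card {x // G x = b} = m + 1) ∧ Bijective (G ∘ Sum.inl)} =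
      (Nat.card β)! * Nat.card {v : γ → β // ∀ b, Nat.card {c // v c = b} = m} := by
  have hsplit (G : β ⊕ γ → β) :
      ((∀ b, Nat.card {x // G x = b} = m + 1) ∧ Bijective (G ∘ Sum.inl)) ↔
        Bijective (G ∘ Sum.inl) ∧ ∀ b, Nat.card {c // (G ∘ Sum.inr) c = b} = m := by
    have hfiber := card_fiber_sumElim (G ∘ Sum.inl) (G ∘ Sum.inr)
    simp only [Sum.elim_comp_inl_inr] at hfiber
    simp only [hfiber, bijective_iff_card_fiber_eq_one]
    constructor
    · rintro ⟨hG, hu⟩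
      exact ⟨hu, fun b => by have := hG b; have := hu b; omega⟩
    · rintro ⟨hu, hv⟩
      exact ⟨fun b => by rw [hu b, hv b, add_comm], hu⟩
  have e : {G : β ⊕ γ → β //
        (∀ b, Nat.card {x // G x = b} = m + 1) ∧ Bijective (G ∘ Sum.inl)} ≃
      {u : β → β // Bijective u} × {v : γ → β // ∀ b, Nat.card {c // v c = b} = m} :=
    ((sumArrowEquivProdArrow β γ β).subtypeEquiv hsplit).trans subtypeProdEquivProd
  rw [Nat.card_congr e, Nat.card_prod, Nat.card_congr bijectiveEquiv, Nat.card_perm]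

end SplitOffBijection

section EquiSquare

variable {n : ℕ}

def rowSplit (i : Fin n) : Fin n ⊕ {p : Fin n × Fin n // p.1 ≠ i} ≃ Fin n × Fin n :=
  (sumCongr
    { toFun := fun j => (⟨(i, j), rfl⟩ : {p : Fin n × Fin n // p.1 = i})
      invFun := fun p => p.1.2
      left_inv := fun _ => rfl
      right_inv := fun ⟨_, h⟩ => by subst h; rfl }
    (Equiv.refl _)).trans (sumCompl fun p : Fin n × Fin n => p.1 = i)

theorem card_cells_off_row (i : Fin n) :
    Nat.card {p : Fin n × Fin n // p.1 ≠ i} = n ^ 2 - n := by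
  have h := Nat.card_congr (rowSplit i)
  rw [Nat.card_sum, Nat.card_prod, Nat.card_fin] at h
  rw [sq]
  omega

theorem card_cells_off_row_in_col (i k : Fin n) :
    Nat.card {p : {p : Fin n × Fin n // p.1 ≠ i} // p.1.2 = k} = n - 1 := by
  have e : {p : {p : Fin n × Fin n // p.1 ≠ i} // p.1.2 = k} ≃ {r : Fin n // r ≠ i} :=
    { toFun := fun p => ⟨p.1.1.1, p.1.2⟩
      invFun := fun r => ⟨⟨(r.1, k), r.2⟩, rfl⟩
      left_inv := fun ⟨⟨_, _⟩, h⟩ => by subst h; rfl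
      right_inv := fun _ => rfl }
  rw [Nat.card_congr e, Nat.card_eq_fintype_card, Fintype.card_subtype_compl, Fintype.card_fin,
    Fintype.card_unique]

theorem isEquiSquare_iff_card_fiber_rowSplit (g : Fin n → Fin n → Fin n) (i : Fin n) :
    IsEquiSquare n g ↔ ∀ k, Nat.card {x // uncurry g (rowSplit i x) = k} = n := by
  simp only [card_fiber_comp_equiv]
  rfl

theorem isEquiSquare_transpose_iff (g : Fin n → Fin n → Fin n) :
    IsEquiSquare n (fun a b => g b a) ↔ IsEquiSquare n g :=
  forall_congr' fun k =>
    iff_of_eq (congrArg (· = n) (card_fiber_comp_equiv (uncurry g) (prodComm _ _) k))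

theorem card_isEquiSquare_bijective_row_mul (i : Fin n) :
    Nat.card {g // IsEquiSquare n g ∧ Bijective (g i)} * (n - 1)! ^ n = n ! * (n ^ 2 - n)! := by
  have e : {g // IsEquiSquare n g ∧ Bijective (g i)} ≃
      {G : Fin n ⊕ {p : Fin n × Fin n // p.1 ≠ i} → Fin n //
        (∀ k, Nat.card {x // G x = k} = n - 1 + 1) ∧ Bijective (G ∘ Sum.inl)} :=
    ((Equiv.curry _ _ _).symm.trans (arrowCongr (rowSplit i).symm (Equiv.refl _))).subtypeEquiv
      fun g => by
        rw [isEquiSquare_iff_card_fiber_rowSplit g i, Nat.sub_add_cancel i.pos]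
        rfl
  have hcount := card_fun_card_fiber_eq_mul_prod_factorial
    fun p : {p : Fin n × Fin n // p.1 ≠ i} => p.1.2
  simp only [card_cells_off_row_in_col, card_cells_off_row, Fin.prod_const] at hcount
  rw [Nat.card_congr e, card_bijective_inl_and_card_fiber_eq, Nat.card_fin, mul_assoc, hcount]

theorem card_isEquiSquare_bijective_row (i : Fin n) :
    (Nat.card {g // IsEquiSquare n g ∧ Bijective (g i)} : ℚ) =
      n ! * (n ^ 2 - n)! / (n - 1)! ^ n := by
  rw [eq_div_iff (by positivity)]
  exact_mod_cast card_isEquiSquare_bijective_row_mul i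

theorem card_isEquiSquare_bijective_col (j : Fin n) :
    Nat.card {g // IsEquiSquare n g ∧ Bijective fun r => g r j} =
      Nat.card {g // IsEquiSquare n g ∧ Bijective (g j)} :=
  Nat.card_congr <| (piComm _).subtypeEquiv fun g =>
    and_congr_left' (isEquiSquare_transpose_iff g).symm

end EquiSquare

theorem card_equiSquares_permutation_row_general (n : ℕ) (i : Fin n) :
    (Nat.card {g : Fin n → Fin n → Fin n //
        IsEquiSquare n g ∧ Function.Bijective (g i)} : ℚ) =
      (n ! : ℚ) * ((n ^ 2 - n)! : ℚ) / ((n - 1)! : ℚ) ^ n ∧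
    (Nat.card {x : (Fin n → Fin n → Fin n) × (Fin n ⊕ Fin n) //
        IsEquiSquare n x.1 ∧
          Sum.elim (fun r => Function.Bijective (x.1 r))
            (fun c => Function.Bijective fun r => x.1 r c) x.2} : ℚ) =
      2 * (n : ℚ) * (n ! : ℚ) * ((n ^ 2 - n)! : ℚ) / ((n - 1)! : ℚ) ^ n := by
  refine ⟨card_isEquiSquare_bijective_row i, ?_⟩
  rw [card_subtype_prod_eq_sum fun g l => IsEquiSquare n g ∧
    Sum.elim (fun r => Bijective (g r)) (fun c => Bijective fun r => g r c) l]
  push_cast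
  simp only [Fintype.sum_sum_type, Sum.elim_inl, Sum.elim_inr, card_isEquiSquare_bijective_col,
    card_isEquiSquare_bijective_row, Finset.sum_const, Finset.card_univ, Fintype.card_fin,
    nsmul_eq_mul]
  ring

/-- The number of equi-`n`-squares whose row `i` is a permutation equals
`n!·(n²−n)!/((n−1)!)^n`; consequently, the total count, over all equi-`n`-squares,
of lines (rows or columns) that are permutations equals `2n·n!·(n²−n)!/((n−1)!)^n`. -/
theorem card_equiSquares_permutation_row (n : ℕ) (hn : 1 ≤ n) (i : Fin n) :
    (Nat.card {g : Fin n → Fin n → Fin n //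
        IsEquiSquare n g ∧ Function.Bijective (g i)} : ℚ) =
      (n ! : ℚ) * ((n ^ 2 - n)! : ℚ) / ((n - 1)! : ℚ) ^ n ∧
    (Nat.card {x : (Fin n → Fin n → Fin n) × (Fin n ⊕ Fin n) //
        IsEquiSquare n x.1 ∧
          Sum.elim (fun r => Function.Bijective (x.1 r))
            (fun c => Function.Bijective fun r => x.1 r c) x.2} : ℚ) =
      2 * (n : ℚ) * (n ! : ℚ) * ((n ^ 2 - n)! : ℚ) / ((n - 1)! : ℚ) ^ n :=
  card_equiSquares_permutation_row_general n i
end
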